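/- arXiv:cs/0701045 — 2 statements merged into one kernel-verified Lean document; each statement's English description precedes it below -/
import Mathlib

section
/- Let u = (s,t) and v = (x,y) be nonzero vectors in ℝ², and let Δ := sy − tx. If arg u < arg v, then (y ≤ 0 ≤ t) or Δ > 0. -/
/-- The argument of a nonzero vector `v = (x,y)` in the plane: the unique `ψ ∈ [0, 2π)`
with `x = |v| cos ψ` and `y = |v| sin ψ`. -/
noncomputable def parg (v : ℝ × ℝ) : ℝ :=
  if Complex.arg ((v.1 : ℂ) + v.2 * Complex.I) < 0 then
    Complex.arg ((v.1 : ℂ) + v.2 * Complex.I) + 2 * Real.pi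
  else
    Complex.arg ((v.1 : ℂ) + v.2 * Complex.I)

/-- The argument `α_i = arg (V_{i+1} - V_i)` of the `i`-th edge vector of the `n`-gon `V`
(indices taken mod `n`, so that `V_n = V_0`). -/
noncomputable def edgeArg (n : ℕ) (V : ℕ → ℝ × ℝ) (i : ℕ) : ℝ :=
  parg (V ((i + 1) % n) - V i)

/-- An `n`-gon is convex if the union of its edges `[V_i, V_{i+1}]` coincides with the
topological boundary of the convex hull of its vertex set. -/
def IsConvexPolygon (n : ℕ) (V : ℕ → ℝ × ℝ) : Prop :=
  (⋃ i ∈ Finset.range n, segment ℝ (V i) (V ((i + 1) % n)))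
    = frontier (convexHull ℝ (V '' Set.Iio n))

/-- `V_i ≠ V_{i+1}` for all `i` (with `V_n = V_0`). -/
def LocallyOrdinary (n : ℕ) (V : ℕ → ℝ × ℝ) : Prop :=
  ∀ i < n, V i ≠ V ((i + 1) % n)

/-- All vertices are pairwise distinct. -/
def Ordinary (n : ℕ) (V : ℕ → ℝ × ℝ) : Prop :=
  ∀ i < n, ∀ j < n, i ≠ j → V i ≠ V j

/-- For every `i`, the vertices `V_{i-1}, V_i, V_{i+1}` are non-collinear. -/
def LocallyStrict (n : ℕ) (V : ℕ → ℝ × ℝ) : Prop :=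
  ∀ i < n, ¬ Collinear ℝ ({V ((i + n - 1) % n), V i, V ((i + 1) % n)} : Set (ℝ × ℝ))

/-- No two adjacent vertices `V_i, V_{i⊕1}` are collinear with any other vertex `V_j`. -/
def QuasiStrict (n : ℕ) (V : ℕ → ℝ × ℝ) : Prop :=
  ∀ i < n, ∀ j < n, j ≠ i → j ≠ (i + 1) % n →
    ¬ Collinear ℝ ({V i, V ((i + 1) % n), V j} : Set (ℝ × ℝ))

/-- No three distinct vertices are collinear. -/
def StrictPolygon (n : ℕ) (V : ℕ → ℝ × ℝ) : Prop :=
  ∀ i < n, ∀ j < n, ∀ k < n, i ≠ j → i ≠ k → j ≠ k →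
    ¬ Collinear ℝ ({V i, V j, V k} : Set (ℝ × ℝ))

/-- The half-open edge `[V_i, V_{i+1})` of the `n`-gon `V`. -/
def halfOpenEdge (n : ℕ) (V : ℕ → ℝ × ℝ) (i : ℕ) : Set (ℝ × ℝ) :=
  segment ℝ (V i) (V ((i + 1) % n)) \ {V ((i + 1) % n)}

/-- `[V_i, V_{i+1}) ∩ [V_{i+1}, V_{i+2}) = ∅` for all `i`. -/
def LocallySimple (n : ℕ) (V : ℕ → ℝ × ℝ) : Prop :=
  ∀ i < n, halfOpenEdge n V i ∩ halfOpenEdge n V ((i + 1) % n) = ∅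

/-- `[V_i, V_{i+1}) ∩ [V_j, V_{j+1}) = ∅` for all distinct `i, j`. -/
def SimplePolygon (n : ℕ) (V : ℕ → ℝ × ℝ) : Prop :=
  ∀ i < n, ∀ j < n, i ≠ j → halfOpenEdge n V i ∩ halfOpenEdge n V j = ∅

/-- The `n`-gon `V` is c-increasing: for some `k ∈ {0,…,n-1}`, one has
`α_k < … < α_{n-1} < α_0 < … < α_{k-1}`, where `α_i = arg (V_{i+1} - V_i)`.
(Equivalently: `α` is strictly increasing along the cyclic order starting at `k`.) -/
noncomputable def CIncreasing (n : ℕ) (V : ℕ → ℝ × ℝ) : Prop :=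
  ∃ k < n, ∀ i < n, ∀ j < n,
    (i + n - k) % n < (j + n - k) % n → edgeArg n V i < edgeArg n V j

/-- c-decreasing: all the inequalities in the definition of c-increasing are reversed. -/
noncomputable def CDecreasing (n : ℕ) (V : ℕ → ℝ × ℝ) : Prop :=
  ∃ k < n, ∀ i < n, ∀ j < n,
    (i + n - k) % n < (j + n - k) % n → edgeArg n V i > edgeArg n V j

/-- c-nondecreasing: as c-increasing, with `≤` in place of `<`. -/
noncomputable def CNondecreasing (n : ℕ) (V : ℕ → ℝ × ℝ) : Prop :=
  ∃ k < n, ∀ i < n, ∀ j < n,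
    (i + n - k) % n < (j + n - k) % n → edgeArg n V i ≤ edgeArg n V j

/-- c-nonincreasing: as c-increasing, with `≥` in place of `<`. -/
noncomputable def CNonincreasing (n : ℕ) (V : ℕ → ℝ × ℝ) : Prop :=
  ∃ k < n, ∀ i < n, ∀ j < n,
    (i + n - k) % n < (j + n - k) % n → edgeArg n V i ≥ edgeArg n V j

open Real

section PolarForm

variable (v : ℝ × ℝ)

lemma parg_nonneg : 0 ≤ parg v := by
  unfold parg
  split_ifs with h
  · linarith [Complex.neg_pi_lt_arg ((v.1 : ℂ) + v.2 * Complex.I), pi_pos]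
  · exact not_lt.1 h

lemma parg_lt_two_pi : parg v < 2 * π := by
  unfold parg
  split_ifs with h
  · linarith
  · linarith [Complex.arg_le_pi ((v.1 : ℂ) + v.2 * Complex.I), pi_pos]

@[simp]
lemma parg_zero : parg 0 = 0 := by
  simp [parg]

lemma norm_mul_cos_parg : ‖(v.1 : ℂ) + v.2 * Complex.I‖ * cos (parg v) = v.1 := by
  unfold parg
  split_ifs <;> simp [cos_add_two_pi, Complex.norm_mul_cos_arg]

lemma norm_mul_sin_parg : ‖(v.1 : ℂ) + v.2 * Complex.I‖ * sin (parg v) = v.2 := by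
  unfold parg
  split_ifs <;> simp [sin_add_two_pi, Complex.norm_mul_sin_arg]

lemma norm_ofReal_add_mul_I_pos {v : ℝ × ℝ} (hv : v ≠ 0) :
    0 < ‖(v.1 : ℂ) + v.2 * Complex.I‖ := by
  rw [← Complex.equivRealProdCLM_symm_apply, norm_pos_iff, map_ne_zero_iff _
    Complex.equivRealProdCLM.symm.injective]
  exact hv

lemma snd_nonneg_of_parg_le_pi {v : ℝ × ℝ} (hv : parg v ≤ π) : 0 ≤ v.2 := by
  rw [← norm_mul_sin_parg]
  exact mul_nonneg (norm_nonneg _) (sin_nonneg_of_nonneg_of_le_pi (parg_nonneg v) hv)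

lemma snd_nonpos_of_pi_le_parg {v : ℝ × ℝ} (hv : π ≤ parg v) : v.2 ≤ 0 := by
  rw [← norm_mul_sin_parg, ← sin_sub_two_pi]
  exact mul_nonpos_of_nonneg_of_nonpos (norm_nonneg _)
    (sin_nonpos_of_nonpos_of_neg_pi_le (by linarith [parg_lt_two_pi v]) (by linarith))

end PolarForm

lemma cross_eq_norm_mul_norm_mul_sin_sub_parg (u v : ℝ × ℝ) :
    u.1 * v.2 - u.2 * v.1 = ‖(u.1 : ℂ) + u.2 * Complex.I‖ * ‖(v.1 : ℂ) + v.2 * Complex.I‖ *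
      sin (parg v - parg u) := by
  rw [sin_sub]
  linear_combination -v.2 * norm_mul_cos_parg u + v.1 * norm_mul_sin_parg u -
    (‖(u.1 : ℂ) + u.2 * Complex.I‖ * cos (parg u)) * norm_mul_sin_parg v +
    (‖(u.1 : ℂ) + u.2 * Complex.I‖ * sin (parg u)) * norm_mul_cos_parg v

theorem parg_lt_imp_general (u v : ℝ × ℝ) (hu : u ≠ 0)
    (h : parg u < parg v) :
    (v.2 ≤ 0 ∧ 0 ≤ u.2) ∨ 0 < u.1 * v.2 - u.2 * v.1 := by
  rcases lt_or_ge 0 (u.1 * v.2 - u.2 * v.1) with hcross | hcross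
  · exact Or.inr hcross
  have hv : v ≠ 0 := by
    rintro rfl
    exact (parg_nonneg u).not_gt (by simpa using h)
  -- `Δ = |u| |v| sin (arg v - arg u)`, so `Δ ≤ 0` forces `arg v - arg u ≥ π`.
  have hsin : sin (parg v - parg u) ≤ 0 := by
    rw [cross_eq_norm_mul_norm_mul_sin_sub_parg] at hcross
    exact nonpos_of_mul_nonpos_right hcross
      (mul_pos (norm_ofReal_add_mul_I_pos hu) (norm_ofReal_add_mul_I_pos hv))
  have hgap : π ≤ parg v - parg u :=
    not_lt.1 fun hlt => (sin_pos_of_pos_of_lt_pi (sub_pos.2 h) hlt).not_ge hsin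
  exact Or.inl ⟨snd_nonpos_of_pi_le_parg (by linarith [parg_nonneg u]),
    snd_nonneg_of_parg_le_pi (by linarith [parg_lt_two_pi v])⟩

/-- For nonzero vectors `u = (s,t)` and `v = (x,y)` with `Δ := s y - t x`:
if `arg u < arg v` then `y ≤ 0 ≤ t` or `Δ > 0`. -/
theorem parg_lt_imp (u v : ℝ × ℝ) (hu : u ≠ 0) (hv : v ≠ 0)
    (h : parg u < parg v) :
    (v.2 ≤ 0 ∧ 0 ≤ u.2) ∨ 0 < u.1 * v.2 - u.2 * v.1 :=
  parg_lt_imp_general u v hu h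
end

section
/- Let n ≥ 3 and let P = (V_0,…,V_{n−1}) be a locally-ordinary c-increasing n-gon in ℝ². Then for every i ∈ {0,…,n−1}, all the vertices V_j with j ∈ {0,…,n−1} ∖ {i, i⊕1} lie strictly on one side of the line through V_i and V_{i+1}; that is, there is an open half-plane H with boundary the line through V_i and V_{i+1} such that V_j ∈ H for all such j (here i⊕1 := i+1 for i ≤ n−2 and i⊕1 := 0 for i = n−1). -/
/-!
Fix the edge `e = V_{i+1} - V_i` and measure points by the functional `W ↦ e ∧ W`, which is
constant on the line through `V_i` and `V_{i+1}`. Walking around the polygon from `V_{i+1}` back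
to `V_i`, the increments are `e ∧ e_m = |e| |e_m| sin (α_m - α_i)` for the other edges `e_m`, and
they sum to `e ∧ (V_i - V_{i+1}) = 0`. Since the directions `α_m` are cyclically increasing, the
angles `α_m - α_i` increase through less than one turn, so once an increment is nonpositive all
later ones are negative. A zero-sum sequence with this sign pattern has all proper prefix sums
positive, and these prefix sums are the values at the remaining vertices minus the value on the
line.
-/

open Finset Real
open Complex (equivRealProdLm)

-- `sbtw a b c` on `ℕ` and `ℝ`: `a < b < c` up to cyclic rotation.
attribute [local instance] LT.toSBtw

section PrefixSum

variable {M : Type*} [AddCommGroup M] [LinearOrder M] [IsOrderedAddMonoid M]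

theorem sum_range_pos_of_sum_eq_zero {x : ℕ → M} {N : ℕ} (hsum : ∑ u ∈ range N, x u = 0)
    (hsign : ∀ s t, s < t → t < N → x s ≤ 0 → x t < 0) {t : ℕ} (ht₀ : 0 < t) (htN : t < N) :
    0 < ∑ u ∈ range t, x u := by
  by_cases hpos : ∀ u ∈ range t, 0 < x u
  · exact sum_pos hpos (nonempty_range_iff.2 ht₀.ne')
  push Not at hpos
  obtain ⟨s, hs, hxs⟩ := hpos
  have htail : ∑ u ∈ Ico t N, x u < 0 := by
    refine sum_neg (fun u hu => ?_) ⟨t, mem_Ico.2 ⟨le_rfl, htN⟩⟩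
    rw [mem_range] at hs
    rw [mem_Ico] at hu
    exact hsign s u (by omega) hu.2 hxs
  rw [eq_neg_of_add_eq_zero_left ((sum_range_add_sum_Ico x htN.le).trans hsum)]
  exact neg_pos.2 htail

end PrefixSum

theorem Nat.sbtw_add_mod {n p s t : ℕ} (hp : p < n) (hs : 0 < s) (hst : s < t) (ht : t < n) :
    sbtw p ((p + s) % n) ((p + t) % n) := by
  have hmod : ∀ u < n, (p + u) % n = if p + u < n then p + u else p + u - n := by
    intro u hu
    split_ifs with h
    · exact Nat.mod_eq_of_lt h
    · rw [Nat.mod_eq_sub_mod (not_lt.1 h), Nat.mod_eq_of_lt (by omega)]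
  rw [sbtw_iff, hmod s (hst.trans ht), hmod t ht]
  split_ifs <;> omega

theorem Nat.add_sub_mod_eq_mod_add {n k : ℕ} (hk : k ≤ n) (a s : ℕ) :
    ((a + s) % n + n - k) % n = ((a + n - k) % n + s) % n := by
  rw [Nat.add_sub_assoc hk, Nat.mod_add_mod, Nat.mod_add_mod]
  congr 1
  omega

theorem Nat.exists_add_mod_eq {n : ℕ} (a : ℕ) {j : ℕ} (hj : j < n) :
    ∃ t < n, (a + t) % n = j := by
  have ha : a % n < n := Nat.mod_lt _ (by omega)
  refine ⟨(j + (n - a % n)) % n, Nat.mod_lt _ (by omega), ?_⟩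
  rw [Nat.add_mod, Nat.mod_mod, Nat.add_mod_mod, show a % n + (j + (n - a % n)) = j + n by omega,
    Nat.add_mod_right, Nat.mod_eq_of_lt hj]

theorem sin_sub_neg_of_sbtw {x y z : ℝ} (hx : x ∈ Set.Ico 0 (2 * π)) (hy : y ∈ Set.Ico 0 (2 * π))
    (hz : z ∈ Set.Ico 0 (2 * π)) (hxyz : sbtw x y z) (hxy : sin (y - x) ≤ 0) :
    sin (z - x) < 0 := by
  obtain ⟨hx₀, hx₁⟩ := hx
  obtain ⟨hy₀, hy₁⟩ := hy
  obtain ⟨hz₀, hz₁⟩ := hz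
  have hπ := pi_pos
  have hfar : x < y → π ≤ y - x := fun h => by
    by_contra! h'
    exact (sin_pos_of_pos_of_lt_pi (by linarith) h').not_ge hxy
  rcases hxyz with ⟨hxy', hyz⟩ | ⟨hyz, hzx⟩ | ⟨hzx, hxy'⟩
  · rw [← sin_sub_two_pi]
    exact sin_neg_of_neg_of_neg_pi_lt (by linarith) (by linarith [hfar hxy'])
  · have hnear : -π ≤ y - x := by
      by_contra! h'
      rw [← sin_add_two_pi] at hxy
      exact (sin_pos_of_pos_of_lt_pi (by linarith) (by linarith)).not_ge hxy
    exact sin_neg_of_neg_of_neg_pi_lt (by linarith) (by linarith)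
  · exact sin_neg_of_neg_of_neg_pi_lt (by linarith) (by linarith [hfar hxy'])

def wedge (v : ℝ × ℝ) : (ℝ × ℝ) →ₗ[ℝ] ℝ :=
  v.1 • LinearMap.snd ℝ ℝ ℝ - v.2 • LinearMap.fst ℝ ℝ ℝ

@[simp]
theorem wedge_apply (v w : ℝ × ℝ) : wedge v w = v.1 * w.2 - v.2 * w.1 := rfl

theorem wedge_self (v : ℝ × ℝ) : wedge v v = 0 := by
  rw [wedge_apply, mul_comm, sub_self]

theorem fst_mul_self_add_snd_mul_self_ne_zero {v : ℝ × ℝ} (hv : v ≠ 0) :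
    v.1 * v.1 + v.2 * v.2 ≠ 0 :=
  fun h => hv (Prod.ext_iff.2 (mul_self_add_mul_self_eq_zero.1 h))

theorem wedge_ne_zero {v : ℝ × ℝ} (hv : v ≠ 0) : wedge v ≠ 0 := fun h =>
  fst_mul_self_add_snd_mul_self_ne_zero hv (by simpa using LinearMap.congr_fun h (-v.2, v.1))

theorem wedge_eq_zero_iff {v w : ℝ × ℝ} (hv : v ≠ 0) : wedge v w = 0 ↔ ∃ r : ℝ, r • v = w := by
  refine ⟨fun h => ?_, ?_⟩
  · have hd := fst_mul_self_add_snd_mul_self_ne_zero hv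
    rw [wedge_apply] at h
    refine ⟨(v.1 * w.1 + v.2 * w.2) / (v.1 * v.1 + v.2 * v.2), Prod.ext ?_ ?_⟩
    · rw [Prod.smul_fst, smul_eq_mul, div_mul_eq_mul_div, div_eq_iff hd]
      linear_combination v.2 * h
    · rw [Prod.smul_snd, smul_eq_mul, div_mul_eq_mul_div, div_eq_iff hd]
      linear_combination -v.1 * h
  · rintro ⟨r, rfl⟩
    rw [wedge_apply, Prod.smul_fst, Prod.smul_snd, smul_eq_mul, smul_eq_mul]
    ring

theorem setOf_wedge_eq_affineSpan {a b : ℝ × ℝ} (hab : a ≠ b) :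
    {W | wedge (b - a) W = wedge (b - a) a} = (affineSpan ℝ {a, b} : Set (ℝ × ℝ)) := by
  ext W
  rw [Set.mem_ofPred_eq, SetLike.mem_coe, ← vsub_vadd W a, vadd_left_mem_affineSpan_pair,
    vsub_eq_sub, vsub_eq_sub, vadd_eq_add, sub_add_cancel, ← sub_eq_zero, ← map_sub,
    wedge_eq_zero_iff (sub_ne_zero.2 hab.symm)]

theorem parg_mem_Ico (v : ℝ × ℝ) : parg v ∈ Set.Ico 0 (2 * π) := by
  have h := Complex.arg_mem_Ioc ((v.1 : ℂ) + v.2 * Complex.I)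
  rw [Set.mem_Ioc] at h
  unfold parg
  split_ifs <;> constructor <;> linarith [pi_pos]

theorem norm_equivRealProdLm_symm_pos {v : ℝ × ℝ} (hv : v ≠ 0) :
    0 < ‖equivRealProdLm.symm v‖ :=
  norm_pos_iff.2 (equivRealProdLm.symm.map_ne_zero_iff.2 hv)

theorem sin_parg (v : ℝ × ℝ) : sin (parg v) = v.2 / ‖equivRealProdLm.symm v‖ := by
  unfold parg
  split_ifs <;> simp [Complex.sin_arg, Complex.equivRealProdLm_symm_apply]

theorem cos_parg {v : ℝ × ℝ} (hv : v ≠ 0) : cos (parg v) = v.1 / ‖equivRealProdLm.symm v‖ := by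
  have hz := equivRealProdLm.symm.map_ne_zero_iff.2 hv
  rw [Complex.equivRealProdLm_symm_apply] at hz
  unfold parg
  split_ifs <;> simp [Complex.cos_arg hz, Complex.equivRealProdLm_symm_apply]

theorem wedge_eq_norm_mul_norm_mul_sin {u v : ℝ × ℝ} (hu : u ≠ 0) (hv : v ≠ 0) :
    wedge u v = ‖equivRealProdLm.symm u‖ * ‖equivRealProdLm.symm v‖ * sin (parg v - parg u) := by
  have hu' := (norm_equivRealProdLm_symm_pos hu).ne'
  have hv' := (norm_equivRealProdLm_symm_pos hv).ne'
  rw [sin_sub, sin_parg, cos_parg hu, sin_parg, cos_parg hv, wedge_apply]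
  field_simp

theorem wedge_neg_of_sbtw {u v w : ℝ × ℝ} (hu : u ≠ 0) (hv : v ≠ 0) (hw : w ≠ 0)
    (h : sbtw (parg u) (parg v) (parg w)) (huv : wedge u v ≤ 0) : wedge u w < 0 := by
  have hnorm := @norm_equivRealProdLm_symm_pos
  rw [wedge_eq_norm_mul_norm_mul_sin hu hv] at huv
  rw [wedge_eq_norm_mul_norm_mul_sin hu hw]
  refine mul_neg_of_pos_of_neg (mul_pos (hnorm hu) (hnorm hw)) ?_
  exact sin_sub_neg_of_sbtw (parg_mem_Ico u) (parg_mem_Ico v) (parg_mem_Ico w) h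
    (nonpos_of_mul_nonpos_right huv (mul_pos (hnorm hu) (hnorm hv)))

section Polygon

variable {n : ℕ} {V : ℕ → ℝ × ℝ}

def edge (n : ℕ) (V : ℕ → ℝ × ℝ) (m : ℕ) : ℝ × ℝ := V ((m + 1) % n) - V m

theorem LocallyOrdinary.edge_ne_zero (hLO : LocallyOrdinary n V) {m : ℕ} (hm : m < n) :
    edge n V m ≠ 0 :=
  sub_ne_zero.2 (hLO m hm).symm

theorem sum_range_edge (n : ℕ) (V : ℕ → ℝ × ℝ) (a t : ℕ) :
    ∑ u ∈ range t, edge n V ((a + u) % n) = V ((a + t) % n) - V (a % n) := by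
  have h := sum_range_sub (fun u => V ((a + u) % n)) t
  rw [add_zero] at h
  rw [← h]
  refine sum_congr rfl fun u _ => ?_
  rw [edge, Nat.mod_add_mod, add_assoc]

theorem CIncreasing.sbtw_edgeArg (hCI : CIncreasing n V) {i s t : ℕ} (hi : i < n) (hs : 0 < s)
    (hst : s < t) (ht : t < n) :
    sbtw (edgeArg n V i) (edgeArg n V ((i + s) % n)) (edgeArg n V ((i + t) % n)) := by
  obtain ⟨k, hk, hmono⟩ := hCI
  have hcyc := Nat.sbtw_add_mod (Nat.mod_lt (i + n - k) (by omega)) hs hst ht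
  rw [← Nat.add_sub_mod_eq_mod_add hk.le, ← Nat.add_sub_mod_eq_mod_add hk.le] at hcyc
  have hs' : (i + s) % n < n := Nat.mod_lt _ (by omega)
  have ht' : (i + t) % n < n := Nat.mod_lt _ (by omega)
  rcases hcyc with ⟨h₁, h₂⟩ | ⟨h₁, h₂⟩ | ⟨h₁, h₂⟩
  · exact .inl ⟨hmono _ hi _ hs' h₁, hmono _ hs' _ ht' h₂⟩
  · exact .inr (.inl ⟨hmono _ hs' _ ht' h₁, hmono _ ht' _ hi h₂⟩)
  · exact .inr (.inr ⟨hmono _ ht' _ hi h₁, hmono _ hi _ hs' h₂⟩)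

theorem CIncreasing.wedge_edge_lt (hCI : CIncreasing n V) (hLO : LocallyOrdinary n V) {i t : ℕ}
    (hi : i < n) (ht₀ : 0 < t) (ht : t < n - 1) :
    wedge (edge n V i) (V i) < wedge (edge n V i) (V ((i + 1 + t) % n)) := by
  set f := wedge (edge n V i)
  have hnext : f (V ((i + 1) % n)) = f (V i) := by
    rw [show V ((i + 1) % n) = V i + edge n V i by rw [edge, add_sub_cancel], map_add,
      wedge_self, add_zero]
  have hsum : ∀ t, ∑ u ∈ range t, f (edge n V ((i + 1 + u) % n))
      = f (V ((i + 1 + t) % n)) - f (V i) := fun t => by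
    rw [← map_sum, sum_range_edge, map_sub, hnext]
  have htotal : ∑ u ∈ range (n - 1), f (edge n V ((i + 1 + u) % n)) = 0 := by
    rw [hsum, show i + 1 + (n - 1) = i + n by omega, Nat.add_mod_right, Nat.mod_eq_of_lt hi,
      sub_self]
  have hsign : ∀ s t, s < t → t < n - 1 → f (edge n V ((i + 1 + s) % n)) ≤ 0 →
      f (edge n V ((i + 1 + t) % n)) < 0 := fun s t hst ht hs => by
    have h := hCI.sbtw_edgeArg (s := s + 1) (t := t + 1) hi (by omega) (by omega) (by omega)
    rw [← add_assoc, ← add_assoc, add_right_comm i s, add_right_comm i t] at h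
    exact wedge_neg_of_sbtw (hLO.edge_ne_zero hi) (hLO.edge_ne_zero (Nat.mod_lt _ (by omega)))
      (hLO.edge_ne_zero (Nat.mod_lt _ (by omega))) h hs
  exact sub_pos.1 (hsum t ▸ sum_range_pos_of_sum_eq_zero htotal hsign ht₀ ht)

end Polygon

theorem cIncreasing_strictly_oneSide_general
    (n : ℕ) (V : ℕ → ℝ × ℝ)
    (hLO : LocallyOrdinary n V) (hCI : CIncreasing n V) :
    ∀ i < n, ∃ (f : (ℝ × ℝ) →ₗ[ℝ] ℝ) (c : ℝ), f ≠ 0 ∧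
      {W : ℝ × ℝ | f W = c}
        = (affineSpan ℝ ({V i, V ((i + 1) % n)} : Set (ℝ × ℝ)) : Set (ℝ × ℝ)) ∧
      ∀ j < n, j ≠ i → j ≠ (i + 1) % n → c < f (V j) := by
  intro i hi
  refine ⟨wedge (edge n V i), wedge (edge n V i) (V i), wedge_ne_zero (hLO.edge_ne_zero hi),
    setOf_wedge_eq_affineSpan (hLO i hi), fun j hj hji hji₁ => ?_⟩
  obtain ⟨t, ht, rfl⟩ := Nat.exists_add_mod_eq (i + 1) hj
  have ht₀ : t ≠ 0 := by rintro rfl; exact hji₁ rfl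
  have ht₁ : t ≠ n - 1 := by
    rintro rfl
    rw [show i + 1 + (n - 1) = i + n by omega, Nat.add_mod_right, Nat.mod_eq_of_lt hi] at hji
    exact hji rfl
  exact hCI.wedge_edge_lt hLO hi (Nat.pos_of_ne_zero ht₀) (by omega)

/-- In a locally-ordinary c-increasing `n`-gon with `n ≥ 3`, for every edge
`[V_i, V_{i+1}]` all the other vertices lie strictly on one side of the line through
`V_i` and `V_{i+1}`: there are a nonzero linear functional `f` and a constant `c` with
the line equal to `{W | f W = c}` and `f (V_j) > c` for all `j ∉ {i, i⊕1}`. -/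
theorem cIncreasing_strictly_oneSide
    (n : ℕ) (hn : 3 ≤ n) (V : ℕ → ℝ × ℝ)
    (hLO : LocallyOrdinary n V) (hCI : CIncreasing n V) :
    ∀ i < n, ∃ (f : (ℝ × ℝ) →ₗ[ℝ] ℝ) (c : ℝ), f ≠ 0 ∧
      {W : ℝ × ℝ | f W = c}
        = (affineSpan ℝ ({V i, V ((i + 1) % n)} : Set (ℝ × ℝ)) : Set (ℝ × ℝ)) ∧
      ∀ j < n, j ≠ i → j ≠ (i + 1) % n → c < f (V j) :=
  cIncreasing_strictly_oneSide_general n V hLO hCI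
end
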